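/- arXiv:2302.03004 — 5 statements merged into one kernel-verified Lean document; each statement's English description precedes it below -/
import Mathlib

section
/- Let ŵ_1,...,ŵ_K ∈ ℝ^d be the columns of a simplex ETF (unit norm, pairwise inner product -1/(K-1)). For a fixed label k, the minimizer m̂ of the dot-regression loss L(m) = (1/2)(ŵ_k^T m - 1)² over {‖m‖² ≤ 1} satisfies ‖m̂‖ = 1 and m̂^T ŵ_{k'} = K/(K-1)·δ_{k,k'} - 1/(K-1) for all k' ∈ [1,K]. -/
open scoped RealInnerProductSpace

/-- For a simplex ETF classifier, the minimizer of the dot-regression loss for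
class `k` over the unit ball has unit norm and inner products
`K/(K-1) δ_{k,k'} - 1/(K-1)` with all prototypes. -/
theorem dr_loss_minimizer_etf (d K : ℕ) (hK : 2 ≤ K)
    (w : Fin K → EuclideanSpace ℝ (Fin d))
    (hunit : ∀ j, ‖w j‖ = 1)
    (hpair : ∀ i j : Fin K, i ≠ j → ⟪w i, w j⟫ = -1 / (K - 1))
    (k : Fin K) (mhat : EuclideanSpace ℝ (Fin d))
    (hfeas : ‖mhat‖ ^ 2 ≤ 1)
    (hmin : ∀ m : EuclideanSpace ℝ (Fin d), ‖m‖ ^ 2 ≤ 1 →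
      (1 / 2 : ℝ) * (⟪w k, mhat⟫ - 1) ^ 2 ≤ (1 / 2 : ℝ) * (⟪w k, m⟫ - 1) ^ 2) :
    ‖mhat‖ = 1 ∧
    ∀ k' : Fin K, ⟪mhat, w k'⟫ =
      (K : ℝ) / (K - 1) * (if k = k' then 1 else 0) - 1 / (K - 1) := by
  have hwk : ⟪w k, w k⟫ = (1 : ℝ) := by
    rw [real_inner_self_eq_norm_sq, hunit k]; ring
  have h0 := hmin (w k) (by rw [hunit k]; norm_num)
  rw [hwk] at h0
  have h1 : ⟪w k, mhat⟫ = (1 : ℝ) := by nlinarith [sq_nonneg (⟪w k, mhat⟫ - 1)]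
  have hnm : ‖mhat‖ = 1 := by
    have hcs := real_inner_le_norm (w k) mhat
    rw [h1, hunit k, one_mul] at hcs
    nlinarith [norm_nonneg mhat]
  have heq : w k = mhat := by
    rw [← inner_eq_one_iff_of_norm_eq_one (𝕜 := ℝ) (hunit k) hnm]; exact h1
  refine ⟨hnm, fun k' => ?_⟩
  rw [← heq]
  by_cases h : k = k'
  · subst h
    rw [hwk, if_pos rfl]
    have : (K : ℝ) - 1 ≠ 0 := by
      have : (2 : ℝ) ≤ K := by exact_mod_cast hK
      linarith
    field_simp
  · rw [hpair k k' h, if_neg h]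
    ring
end

section
/- Let ŵ_1,...,ŵ_K ∈ ℝ^d (K ≥ 2) be the columns of a simplex ETF, and fix a class k. Consider the cross-entropy loss L(m) = -log( exp(ŵ_k^T m) / Σ_{j=1}^K exp(ŵ_j^T m) ) over the constraint set {m ∈ ℝ^d : ‖m‖² ≤ 1}. Then the global minimizer m̂ satisfies ‖m̂‖ = 1, m̂ = ŵ_k, and hence m̂^T ŵ_{k'} = K/(K-1)·δ_{k,k'} - 1/(K-1) for all k'. -/
open scoped RealInnerProductSpace BigOperators

/-- The global minimizer over the unit ball of the cross-entropy loss with a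
fixed simplex-ETF classifier and label `k` has unit norm, equals `ŵ_k`, and
its inner products with the prototypes are `K/(K-1) δ_{k,k'} - 1/(K-1)`. -/
theorem ce_loss_minimizer_etf (d K : ℕ) (hK : 2 ≤ K)
    (w : Fin K → EuclideanSpace ℝ (Fin d))
    (hunit : ∀ j, ‖w j‖ = 1)
    (hpair : ∀ i j : Fin K, i ≠ j → ⟪w i, w j⟫ = -1 / (K - 1))
    (hsum : ∑ j : Fin K, w j = 0)
    (k : Fin K) (mhat : EuclideanSpace ℝ (Fin d))
    (hfeas : ‖mhat‖ ^ 2 ≤ 1)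
    (hmin : ∀ m : EuclideanSpace ℝ (Fin d), ‖m‖ ^ 2 ≤ 1 →
      -Real.log (Real.exp ⟪w k, mhat⟫ / ∑ j : Fin K, Real.exp ⟪w j, mhat⟫) ≤
      -Real.log (Real.exp ⟪w k, m⟫ / ∑ j : Fin K, Real.exp ⟪w j, m⟫)) :
    ‖mhat‖ = 1 ∧ mhat = w k ∧
    ∀ k' : Fin K, ⟪mhat, w k'⟫ =
      (K : ℝ) / (K - 1) * (if k = k' then 1 else 0) - 1 / (K - 1) := by
  haveI : NeZero K := ⟨by omega⟩
  have hKr : (2:ℝ) ≤ (K:ℝ) := by exact_mod_cast hK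
  have hK1 : (1:ℝ) ≤ (K:ℝ) - 1 := by linarith
  have hK1ne : ((K:ℝ) - 1) ≠ 0 := by linarith
  set c := ⟪w k, mhat⟫ with hc
  have hmn : ‖mhat‖ ≤ 1 := by nlinarith [norm_nonneg mhat]
  have hcle' : c ≤ ‖mhat‖ := by
    have h1 : c ≤ ‖w k‖ * ‖mhat‖ := real_inner_le_norm _ _
    rwa [hunit k, one_mul] at h1
  have hcle : c ≤ 1 := hcle'.trans hmn
  have hwkk : ⟪w k, w k⟫ = (1:ℝ) := by
    rw [real_inner_self_eq_norm_sq, hunit k]; norm_num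
  set Sm := ∑ j : Fin K, Real.exp ⟪w j, mhat⟫ with hSmdef
  set Sw := ∑ j : Fin K, Real.exp ⟪w j, w k⟫ with hSwdef
  have hSm : (0:ℝ) < Sm :=
    Finset.sum_pos (fun j _ => Real.exp_pos _) Finset.univ_nonempty
  have hSw : (0:ℝ) < Sw :=
    Finset.sum_pos (fun j _ => Real.exp_pos _) Finset.univ_nonempty
  have H := hmin (w k) (by rw [hunit k]; norm_num)
  rw [Real.log_div (Real.exp_ne_zero _) (ne_of_gt hSm),
      Real.log_div (Real.exp_ne_zero _) (ne_of_gt hSw),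
      Real.log_exp, Real.log_exp, hwkk] at H
  have key : Real.log Sm + (-c) ≤ Real.log Sw + (-1) := by linarith
  have H2 : Sm * Real.exp (-c) ≤ Sw * Real.exp (-1) := by
    have h := Real.exp_le_exp.2 key
    rwa [Real.exp_add, Real.exp_add, Real.exp_log hSm, Real.exp_log hSw] at h
  set E := Real.exp (-1/((K:ℝ)-1) - 1) with hE
  have hEpos : 0 < E := Real.exp_pos _
  -- rewrite both sides as sums of exponentials of differences
  have eL : Sm * Real.exp (-c) = ∑ j : Fin K, Real.exp (⟪w j, mhat⟫ - c) := by
    rw [hSmdef, Finset.sum_mul]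
    refine Finset.sum_congr rfl fun j _ => ?_
    rw [← Real.exp_add, sub_eq_add_neg]
  have eR : Sw * Real.exp (-1) = ∑ j : Fin K, Real.exp (⟪w j, w k⟫ - 1) := by
    rw [hSwdef, Finset.sum_mul]
    refine Finset.sum_congr rfl fun j _ => ?_
    rw [← Real.exp_add, sub_eq_add_neg]
  have hcard : ((Finset.univ.erase k).card : ℝ) = (K:ℝ) - 1 := by
    rw [Finset.card_erase_of_mem (Finset.mem_univ k), Finset.card_univ, Fintype.card_fin]
    have : 1 ≤ K := by omega
    push_cast [this]
    ring
  -- right-hand side value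
  have hR : (∑ j : Fin K, Real.exp (⟪w j, w k⟫ - 1)) = 1 + ((K:ℝ)-1) * E := by
    rw [← Finset.sum_erase_add _ _ (Finset.mem_univ k), hwkk]
    have h1 : ∀ j ∈ Finset.univ.erase k, Real.exp (⟪w j, w k⟫ - 1) = E := by
      intro j hj
      rw [hpair j k (Finset.ne_of_mem_erase hj), hE]
    rw [Finset.sum_congr rfl h1, Finset.sum_const, nsmul_eq_mul, hcard]
    simp only [sub_self, Real.exp_zero]
    ring
  -- the sum of inner products is zero
  have hsum0 : ∑ j : Fin K, ⟪w j, mhat⟫ = 0 := by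
    rw [← sum_inner, hsum, inner_zero_left]
  have hErase : ∑ j ∈ Finset.univ.erase k, ⟪w j, mhat⟫ = -c := by
    have h := Finset.sum_erase_add Finset.univ (fun j => ⟪w j, mhat⟫) (Finset.mem_univ k)
    rw [hsum0] at h
    linarith
  -- tangent-line lower bound on the left-hand side
  have hL : 1 + E * (((K:ℝ)-1) * (2 + 1/((K:ℝ)-1) - c) + (-c))
      ≤ ∑ j : Fin K, Real.exp (⟪w j, mhat⟫ - c) := by
    rw [← Finset.sum_erase_add _ _ (Finset.mem_univ k), ← hc, sub_self, Real.exp_zero]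
    have hterm : ∀ j ∈ Finset.univ.erase k,
        E * ((2 + 1/((K:ℝ)-1) - c) + ⟪w j, mhat⟫) ≤ Real.exp (⟪w j, mhat⟫ - c) := by
      intro j _
      have h0 := Real.add_one_le_exp ((⟪w j, mhat⟫ - c) - (-1/((K:ℝ)-1) - 1))
      have h1 : E * (((⟪w j, mhat⟫ - c) - (-1/((K:ℝ)-1) - 1)) + 1)
          ≤ E * Real.exp ((⟪w j, mhat⟫ - c) - (-1/((K:ℝ)-1) - 1)) := by
        exact mul_le_mul_of_nonneg_left (by linarith) hEpos.le
      rw [hE, ← Real.exp_add] at h1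
      have h2 : -1/((K:ℝ)-1) - 1 + (⟪w j, mhat⟫ - c - (-1/((K:ℝ)-1) - 1))
          = ⟪w j, mhat⟫ - c := by ring
      rw [h2] at h1
      calc E * ((2 + 1/((K:ℝ)-1) - c) + ⟪w j, mhat⟫)
          = Real.exp (-1/((K:ℝ)-1) - 1) * ((⟪w j, mhat⟫ - c - (-1/((K:ℝ)-1) - 1)) + 1) := by
            rw [← hE]; ring
        _ ≤ Real.exp (⟪w j, mhat⟫ - c) := h1
    have hsle := Finset.sum_le_sum hterm
    have hval : ∑ j ∈ Finset.univ.erase k, E * ((2 + 1/((K:ℝ)-1) - c) + ⟪w j, mhat⟫)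
        = E * (((K:ℝ)-1) * (2 + 1/((K:ℝ)-1) - c) + (-c)) := by
      have hsplit : ∀ j ∈ Finset.univ.erase k,
          E * ((2 + 1/((K:ℝ)-1) - c) + ⟪w j, mhat⟫)
            = E * (2 + 1/((K:ℝ)-1) - c) + E * ⟪w j, mhat⟫ := fun j _ => by ring
      rw [Finset.sum_congr rfl hsplit, Finset.sum_add_distrib, Finset.sum_const,
        nsmul_eq_mul, hcard, ← Finset.mul_sum, hErase]
      ring
    linarith [hval ▸ hsle]
  -- combine to get c ≥ 1, hence c = 1
  have hcombined : 1 + E * (((K:ℝ)-1) * (2 + 1/((K:ℝ)-1) - c) + (-c)) ≤ 1 + ((K:ℝ)-1) * E := by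
    calc 1 + E * (((K:ℝ)-1) * (2 + 1/((K:ℝ)-1) - c) + (-c))
        ≤ ∑ j : Fin K, Real.exp (⟪w j, mhat⟫ - c) := hL
      _ = Sm * Real.exp (-c) := eL.symm
      _ ≤ Sw * Real.exp (-1) := H2
      _ = ∑ j : Fin K, Real.exp (⟪w j, w k⟫ - 1) := eR
      _ = 1 + ((K:ℝ)-1) * E := hR
  have hfrac : ((K:ℝ)-1) * (1/((K:ℝ)-1)) = 1 := by field_simp
  have hKpos : (0:ℝ) < (K:ℝ) := by linarith
  have h3 : E * (((K:ℝ)-1) * (2 + 1/((K:ℝ)-1) - c) + (-c)) ≤ ((K:ℝ)-1) * E := by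
    linarith
  have h4 : ((K:ℝ)-1) * (2 + 1/((K:ℝ)-1) - c) + (-c) = ((K:ℝ)-1) + (K:ℝ)*(1-c) := by
    field_simp
    ring
  rw [h4] at h3
  have h5 : E * ((K:ℝ)*(1-c)) ≤ 0 := by nlinarith [h3]
  have hge : (1:ℝ) ≤ c := by
    by_contra hlt
    push_neg at hlt
    have hpos : 0 < E * ((K:ℝ)*(1-c)) :=
      mul_pos hEpos (mul_pos hKpos (by linarith))
    linarith
  have hceq : c = 1 := le_antisymm hcle hge
  have hnorm : ‖mhat‖ = 1 := le_antisymm hmn (by linarith [hcle'])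
  have heq : w k = mhat := (inner_eq_one_iff_of_norm_eq_one (hunit k) hnorm).1 (by rw [← hc, hceq])
  refine ⟨hnorm, heq.symm, fun k' => ?_⟩
  rw [← heq]
  by_cases hkk : k = k'
  · subst hkk
    rw [hwkk, if_pos rfl]
    field_simp
  · rw [hpair k k' hkk, if_neg hkk]
    ring
end

section
/- Let ŵ_1,...,ŵ_K be a simplex ETF in ℝ^d, fix class k, and let m satisfy the stationarity equation Σ_{j≠k} p_j (ŵ_j - ŵ_k) + 2λ m = 0 for some λ > 0, where p_j are the softmax probabilities of m. Then for any two indices j_1, j_2 ≠ k: p_{j_1} = p_{j_2}. -/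
open scoped RealInnerProductSpace BigOperators

/-- If `m` satisfies the stationarity equation
`Σ_{j≠k} p_j (ŵ_j - ŵ_k) + 2λ m = 0` with `λ > 0`, where `p_j` are the softmax
probabilities of `m` w.r.t. a simplex ETF classifier, then all off-label softmax
probabilities coincide. -/
theorem stationarity_equal_offlabel_probs (d K : ℕ) (hK : 2 ≤ K)
    (w : Fin K → EuclideanSpace ℝ (Fin d))
    (hunit : ∀ j, ‖w j‖ = 1)
    (hpair : ∀ i j : Fin K, i ≠ j → ⟪w i, w j⟫ = -1 / (K - 1))
    (hsum : ∑ j : Fin K, w j = 0)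
    (k : Fin K) (m : EuclideanSpace ℝ (Fin d)) (lam : ℝ) (hlam : 0 < lam)
    (p : Fin K → ℝ)
    (hp : ∀ j, p j = Real.exp ⟪w j, m⟫ / ∑ j' : Fin K, Real.exp ⟪w j', m⟫)
    (hstat : ∑ j ∈ Finset.univ.erase k, p j • (w j - w k) + (2 * lam) • m = 0) :
    ∀ j₁ j₂ : Fin K, j₁ ≠ k → j₂ ≠ k → p j₁ = p j₂ := by
  intro j₁ j₂ h₁ h₂
  set Z := ∑ j' : Fin K, Real.exp ⟪w j', m⟫ with hZdef
  have hZpos : 0 < Z := Finset.sum_pos (fun j _ => Real.exp_pos _) ⟨k, Finset.mem_univ k⟩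
  have hppos : ∀ j, 0 < p j := by
    intro j; rw [hp j]; exact div_pos (Real.exp_pos _) hZpos
  have hK1 : (1:ℝ) ≤ (K:ℝ) - 1 := by
    have : (2:ℝ) ≤ (K:ℝ) := by exact_mod_cast hK
    linarith
  set c : ℝ := -1 / ((K:ℝ) - 1) with hcdef
  have hc : c < 1 := by
    have h0 : (0:ℝ) < (K:ℝ) - 1 := by linarith
    have : c < 0 := div_neg_of_neg_of_pos (by norm_num) h0
    linarith
  set a : ℝ := (1 - c) / (2 * lam) with hadef
  have ha : 0 < a := div_pos (by linarith) (by linarith)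
  set S := ∑ j ∈ Finset.univ.erase k, p j with hSdef
  have hww : ∀ j, ⟪w j, w j⟫ = (1:ℝ) := by
    intro j
    have := real_inner_self_eq_norm_sq (w j)
    rw [hunit j] at this
    simpa using this
  have hG : ∀ j i : Fin K, j ≠ k → i ≠ k →
      ⟪w j - w k, w i - w k⟫ = (if j = i then 2 - 2*c else 1 - c) := by
    intro j i hj hi
    rw [inner_sub_left, inner_sub_right, inner_sub_right]
    by_cases hji : j = i
    · subst hji
      rw [hww, hww, hpair j k hj, hpair k j (Ne.symm hj), if_pos rfl]
      ring
    · rw [hww, hpair j i hji, hpair j k hj, hpair k i (Ne.symm hi), if_neg hji]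
      ring
  have key : ∀ i : Fin K, i ≠ k → ⟪w i, m⟫ = ⟪w k, m⟫ - a * (S + p i) := by
    intro i hi
    have h0 := congrArg (fun v : EuclideanSpace ℝ (Fin d) => ⟪v, w i - w k⟫) hstat
    simp only [inner_add_left, inner_zero_left, sum_inner, real_inner_smul_left] at h0
    have hsum2 : ∑ j ∈ Finset.univ.erase k, p j * ⟪w j - w k, w i - w k⟫
        = (1-c)*S + (1-c)*(p i) := by
      have : ∀ j ∈ Finset.univ.erase k, p j * ⟪w j - w k, w i - w k⟫
          = p j * (1-c) + (if j = i then (1-c) * p j else 0) := by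
        intro j hj
        have hj' : j ≠ k := Finset.ne_of_mem_erase hj
        rw [hG j i hj' hi]
        by_cases hji : j = i <;> simp [hji] <;> ring
      rw [Finset.sum_congr rfl this, Finset.sum_add_distrib,
        Finset.sum_ite_eq' (Finset.univ.erase k) i (fun j => (1-c) * p j)]
      have hik : i ∈ Finset.univ.erase k := Finset.mem_erase.mpr ⟨hi, Finset.mem_univ i⟩
      rw [if_pos hik, ← Finset.sum_mul, hSdef]
      ring
    rw [hsum2] at h0
    have hmik : ⟪m, w i - w k⟫ = ⟪w i, m⟫ - ⟪w k, m⟫ := by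
      rw [inner_sub_right, real_inner_comm m (w i), real_inner_comm m (w k)]
    rw [hmik] at h0
    have hlam' : lam ≠ 0 := ne_of_gt hlam
    have h2 : a * (2*lam) = 1 - c := by
      rw [hadef]; field_simp
    have h3 : (2*lam) * ⟪w i, m⟫ = (2*lam) * (⟪w k, m⟫ - a*(S + p i)) := by
      linear_combination h0 + (S + p i) * h2
    exact mul_left_cancel₀ (by positivity) h3
  have heq : ∀ i : Fin K, i ≠ k →
      p i * Real.exp (a * p i) = Real.exp (⟪w k, m⟫ - a*S) / Z := by
    intro i hi
    have h1 := hp i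
    rw [key i hi] at h1
    nth_rewrite 1 [h1]
    rw [div_mul_eq_mul_div, ← Real.exp_add]
    have harith : (⟪w k, m⟫ - a*(S + p i)) + a * p i = ⟪w k, m⟫ - a*S := by ring
    rw [harith]
  have e : p j₁ * Real.exp (a * p j₁) = p j₂ * Real.exp (a * p j₂) := by
    rw [heq j₁ h₁, heq j₂ h₂]
  have mono : ∀ x y : ℝ, 0 < x → x < y → x * Real.exp (a*x) < y * Real.exp (a*y) := by
    intro x y hx hxy
    have hE : Real.exp (a*x) < Real.exp (a*y) :=
      Real.exp_lt_exp.mpr (mul_lt_mul_of_pos_left hxy ha)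
    nlinarith [Real.exp_pos (a*x), Real.exp_pos (a*y)]
  rcases lt_trichotomy (p j₁) (p j₂) with h | h | h
  · exact absurd e (ne_of_lt (mono _ _ (hppos j₁) h))
  · exact h
  · exact absurd e.symm (ne_of_lt (mono _ _ (hppos j₂) h))
end

section
/- Consider the incremental optimization problem: for sessions t = 0,...,T, minimize (1/N^{(t)}) Σ_{k∈C^{(t)}} Σ_{i=1}^{n_k} (1/2)(ŵ_k^T m_{k,i} - 1)² subject to ‖m_{k,i}‖² ≤ 1, where the label sets C^{(t)} are disjoint with union [1,K] and ŵ_1,...,ŵ_K is a fixed simplex ETF for the whole label space. Then the session-wise global minimizers satisfy, jointly for all sessions: ‖m̂_{k,i}‖ = 1 and m̂_{k,i}^T ŵ_{k'} = K/(K-1)·δ_{k,k'} - 1/(K-1) for all k, k' ∈ [1,K] and all i. In particular, the optimality is independent of the class sizes n_k and session sizes, which may be imbalanced. -/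
/-!
The loss of a session is a sum of squares, and the prototypes themselves (`m k i = w k`) are a
feasible point of loss zero. Hence every minimizer has zero loss, i.e. `⟪w k, m k i⟫ = 1` for all
features of the session. Since `‖w k‖ = 1` and `‖m k i‖ ≤ 1`, this is the equality case of
Cauchy–Schwarz, so `m k i = w k`, and the inner products with the prototypes are those of the
simplex ETF.
-/

open scoped RealInnerProductSpace BigOperators

variable {E : Type*} [NormedAddCommGroup E] [InnerProductSpace ℝ E]

theorem eq_of_inner_eq_one_of_norm_le_one {u v : E} (hu : ‖u‖ = 1) (hv : ‖v‖ ≤ 1)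
    (h : ⟪u, v⟫ = 1) : u = v := by
  have hv' : 1 ≤ ‖v‖ := by simpa [h, hu] using real_inner_le_norm u v
  exact (inner_eq_one_iff_of_norm_eq_one hu (le_antisymm hv hv')).mp h

theorem real_inner_eq_of_simplexETF {ι : Type*} [DecidableEq ι] {K : ℕ} (hK : K ≠ 1)
    {w : ι → E} (hunit : ∀ j, ‖w j‖ = 1)
    (hpair : ∀ i j, i ≠ j → ⟪w i, w j⟫ = -1 / (K - 1)) (k k' : ι) :
    ⟪w k, w k'⟫ = (K : ℝ) / (K - 1) * (if k = k' then 1 else 0) - 1 / (K - 1) := by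
  have hK' : (K : ℝ) - 1 ≠ 0 := sub_ne_zero.mpr (by exact_mod_cast hK)
  by_cases hkk : k = k'
  · subst hkk
    rw [real_inner_self_eq_norm_sq, hunit k, if_pos rfl]
    field_simp
  · rw [hpair k k' hkk, if_neg hkk]
    ring

section DotRegression

variable {ι : Type*} {n : ι → ℕ}

noncomputable def dotRegressionLoss (w : ι → E) (C : Finset ι) (m : (k : ι) → Fin (n k) → E) : ℝ :=
  ∑ k ∈ C, ∑ i : Fin (n k), (1 / 2 : ℝ) * (⟪w k, m k i⟫ - 1) ^ 2

variable {w : ι → E} {C : Finset ι}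

theorem dotRegressionLoss_nonneg (m : (k : ι) → Fin (n k) → E) :
    0 ≤ dotRegressionLoss w C m :=
  Finset.sum_nonneg fun _ _ => Finset.sum_nonneg fun _ _ => by positivity

theorem dotRegressionLoss_eq_zero_iff {m : (k : ι) → Fin (n k) → E} :
    dotRegressionLoss w C m = 0 ↔ ∀ k ∈ C, ∀ i, ⟪w k, m k i⟫ = 1 := by
  unfold dotRegressionLoss
  rw [Finset.sum_eq_zero_iff_of_nonneg fun _ _ =>
    Finset.sum_nonneg fun _ _ => by positivity]
  refine forall₂_congr fun k _ => ?_
  rw [Finset.sum_eq_zero_iff_of_nonneg fun _ _ => by positivity]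
  simp [sub_eq_zero]

theorem dotRegressionLoss_prototypes (hw : ∀ k ∈ C, ‖w k‖ = 1) :
    dotRegressionLoss w C (fun k (_ : Fin (n k)) => w k) = 0 :=
  dotRegressionLoss_eq_zero_iff.mpr fun k hk _ => by
    rw [real_inner_self_eq_norm_sq, hw k hk, one_pow]

theorem inner_eq_one_of_isMinimizer_dotRegressionLoss (hw : ∀ k ∈ C, ‖w k‖ = 1)
    {m : (k : ι) → Fin (n k) → E}
    (hmin : ∀ m' : (k : ι) → Fin (n k) → E, (∀ k ∈ C, ∀ i, ‖m' k i‖ ^ 2 ≤ 1) →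
      (1 / ∑ k ∈ C, (n k : ℝ)) * dotRegressionLoss w C m ≤
        (1 / ∑ k ∈ C, (n k : ℝ)) * dotRegressionLoss w C m') :
    ∀ k ∈ C, ∀ i, ⟪w k, m k i⟫ = 1 := by
  intro k hk i
  have hsize : 0 < ∑ k ∈ C, (n k : ℝ) :=
    lt_of_lt_of_le (by exact_mod_cast i.pos)
      (Finset.single_le_sum (f := fun k => (n k : ℝ)) (fun _ _ => by positivity) hk)
  have hle := hmin _ fun k hk _ => by rw [hw k hk, one_pow]
  rw [dotRegressionLoss_prototypes hw, mul_zero] at hle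
  have hzero : dotRegressionLoss w C m = 0 :=
    le_antisymm (nonpos_of_mul_nonpos_right hle (by positivity)) (dotRegressionLoss_nonneg m)
  exact dotRegressionLoss_eq_zero_iff.mp hzero k hk i

end DotRegression

theorem incremental_dr_global_optimality_general (d K T : ℕ) (hK : 2 ≤ K)
    (w : Fin K → EuclideanSpace ℝ (Fin d))
    (hunit : ∀ j, ‖w j‖ = 1)
    (hpair : ∀ i j : Fin K, i ≠ j → ⟪w i, w j⟫ = -1 / (K - 1))
    (C : Fin (T + 1) → Finset (Fin K))
    (hcover : ∀ k : Fin K, ∃ t, k ∈ C t)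
    (n : Fin K → ℕ)
    (m : (k : Fin K) → Fin (n k) → EuclideanSpace ℝ (Fin d))
    (hfeas : ∀ (t : Fin (T + 1)), ∀ k ∈ C t, ∀ i, ‖m k i‖ ^ 2 ≤ 1)
    (hmin : ∀ (t : Fin (T + 1)),
      ∀ m' : (k : Fin K) → Fin (n k) → EuclideanSpace ℝ (Fin d),
        (∀ k ∈ C t, ∀ i, ‖m' k i‖ ^ 2 ≤ 1) →
        (1 / (∑ k ∈ C t, (n k : ℝ))) *
            ∑ k ∈ C t, ∑ i : Fin (n k), (1 / 2 : ℝ) * (⟪w k, m k i⟫ - 1) ^ 2 ≤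
        (1 / (∑ k ∈ C t, (n k : ℝ))) *
            ∑ k ∈ C t, ∑ i : Fin (n k), (1 / 2 : ℝ) * (⟪w k, m' k i⟫ - 1) ^ 2) :
    ∀ (k : Fin K) (i : Fin (n k)),
      ‖m k i‖ = 1 ∧
      ∀ k' : Fin K, ⟪m k i, w k'⟫ =
        (K : ℝ) / (K - 1) * (if k = k' then 1 else 0) - 1 / (K - 1) := by
  intro k i
  obtain ⟨t, hkt⟩ := hcover k
  have hinner : ⟪w k, m k i⟫ = 1 :=
    inner_eq_one_of_isMinimizer_dotRegressionLoss (fun k _ => hunit k) (hmin t) k hkt i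
  have hnorm : ‖m k i‖ ≤ 1 := (sq_le_one_iff₀ (norm_nonneg _)).mp (hfeas t k hkt i)
  rw [← eq_of_inner_eq_one_of_norm_le_one (hunit k) hnorm hinner]
  exact ⟨hunit k, real_inner_eq_of_simplexETF (by omega) hunit hpair k⟩

/-- Incremental optimization with a fixed simplex-ETF classifier: if in each
session `t` the features of the classes of that session minimize the averaged
dot-regression loss over the unit ball, then jointly over all sessions every
feature has unit norm and inner products `K/(K-1) δ_{k,k'} - 1/(K-1)` with all
prototypes — independently of the (possibly imbalanced) class/session sizes. -/
theorem incremental_dr_global_optimality (d K T : ℕ) (hK : 2 ≤ K)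
    (w : Fin K → EuclideanSpace ℝ (Fin d))
    (hunit : ∀ j, ‖w j‖ = 1)
    (hpair : ∀ i j : Fin K, i ≠ j → ⟪w i, w j⟫ = -1 / (K - 1))
    (C : Fin (T + 1) → Finset (Fin K))
    (hdisj : ∀ t t' : Fin (T + 1), t ≠ t' → Disjoint (C t) (C t'))
    (hcover : ∀ k : Fin K, ∃ t, k ∈ C t)
    (n : Fin K → ℕ)
    (m : (k : Fin K) → Fin (n k) → EuclideanSpace ℝ (Fin d))
    (hfeas : ∀ (t : Fin (T + 1)), ∀ k ∈ C t, ∀ i, ‖m k i‖ ^ 2 ≤ 1)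
    (hmin : ∀ (t : Fin (T + 1)),
      ∀ m' : (k : Fin K) → Fin (n k) → EuclideanSpace ℝ (Fin d),
        (∀ k ∈ C t, ∀ i, ‖m' k i‖ ^ 2 ≤ 1) →
        (1 / (∑ k ∈ C t, (n k : ℝ))) *
            ∑ k ∈ C t, ∑ i : Fin (n k), (1 / 2 : ℝ) * (⟪w k, m k i⟫ - 1) ^ 2 ≤
        (1 / (∑ k ∈ C t, (n k : ℝ))) *
            ∑ k ∈ C t, ∑ i : Fin (n k), (1 / 2 : ℝ) * (⟪w k, m' k i⟫ - 1) ^ 2) :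
    ∀ (k : Fin K) (i : Fin (n k)),
      ‖m k i‖ = 1 ∧
      ∀ k' : Fin K, ⟪m k i, w k'⟫ =
        (K : ℝ) / (K - 1) * (if k = k' then 1 else 0) - 1 / (K - 1) :=
  incremental_dr_global_optimality_general d K T hK w hunit hpair C hcover n m hfeas hmin
end

section
/- Let ŵ_1,...,ŵ_K be a simplex ETF in ℝ^d. For a fixed k, the maximum of the softmax probability p_k(m) = exp(ŵ_k^T m)/Σ_j exp(ŵ_j^T m) over the unit ball {‖m‖ ≤ 1} is attained at m = ŵ_k, with value 1/(1 + (K-1)·exp(-K/(K-1))). -/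
/-!
Write `p_k(m) = 1 / (1 + ∑_{j ≠ k} exp ⟪ŵ_j - ŵ_k, m⟫)`. The ETF vectors sum to zero, so the
`K - 1` exponents add up to `-K ⟪ŵ_k, m⟫ ≥ -K` on the unit ball, and by convexity of `exp` the
sum of exponentials is at least `(K - 1) exp (-K/(K-1))`. At `m = ŵ_k` every exponent equals
`-K/(K-1)`, so the bound is attained there.
-/

open scoped RealInnerProductSpace BigOperators

open Finset Real

theorem card_mul_exp_le_sum_exp {ι : Type*} (s : Finset ι) (x : ι → ℝ) {c : ℝ}
    (h : #s * c ≤ ∑ i ∈ s, x i) : #s * exp c ≤ ∑ i ∈ s, exp (x i) := by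
  have htangent : ∀ i ∈ s, exp c * (x i - c + 1) ≤ exp (x i) := fun i _ =>
    calc exp c * (x i - c + 1) ≤ exp c * exp (x i - c) := by gcongr; exact add_one_le_exp _
      _ = exp (x i) := by rw [← exp_add, add_sub_cancel]
  calc #s * exp c ≤ exp c * ∑ i ∈ s, (x i - c + 1) := by
        rw [sum_add_distrib, sum_sub_distrib, sum_const, sum_const, nsmul_eq_mul, nsmul_eq_mul]
        nlinarith [exp_pos c]
    _ ≤ ∑ i ∈ s, exp (x i) := by rw [mul_sum]; exact sum_le_sum htangent

theorem exp_div_sum_exp_eq_one_div {ι : Type*} [Fintype ι] [DecidableEq ι] (a : ι → ℝ) (k : ι) :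
    exp (a k) / ∑ j, exp (a j) = 1 / (1 + ∑ j ∈ univ.erase k, exp (a j - a k)) := by
  have hfactor : ∑ j, exp (a j) = exp (a k) * (1 + ∑ j ∈ univ.erase k, exp (a j - a k)) := by
    rw [← add_sum_erase _ _ (mem_univ k), mul_add, mul_one, mul_sum]
    congr 1
    exact sum_congr rfl fun j _ => by rw [← exp_add, add_sub_cancel]
  rw [hfactor, ← div_div, div_self (exp_pos _).ne']

theorem sum_erase_sub_eq {ι : Type*} [Fintype ι] [DecidableEq ι] (a : ι → ℝ) (k : ι) :
    ∑ j ∈ univ.erase k, (a j - a k) = ∑ j, a j - Fintype.card ι * a k := by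
  rw [sum_sub_distrib, sum_erase_eq_sub (mem_univ k), sum_const, nsmul_eq_mul,
    cast_card_erase_of_mem (mem_univ k), card_univ]
  ring

section SimplexETF

variable {E : Type*} [NormedAddCommGroup E] [InnerProductSpace ℝ E] {K : ℕ}
  {w : Fin K → E}

theorem inner_sum_eq_zero_of_simplexETF (hK : 2 ≤ K) (hunit : ∀ j, ‖w j‖ = 1)
    (hpair : ∀ i j : Fin K, i ≠ j → ⟪w i, w j⟫ = -1 / (K - 1)) (i : Fin K) :
    ⟪w i, ∑ j, w j⟫ = 0 := by
  have hK1 : (K : ℝ) - 1 ≠ 0 := by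
    have : (2 : ℝ) ≤ K := by exact_mod_cast hK
    linarith
  rw [inner_sum, ← add_sum_erase _ _ (mem_univ i), real_inner_self_eq_norm_sq, hunit i,
    sum_congr rfl fun j hj => hpair i j (ne_of_mem_erase hj).symm, sum_const, nsmul_eq_mul,
    cast_card_erase_of_mem (mem_univ i), card_univ, Fintype.card_fin]
  field_simp
  ring

theorem sum_eq_zero_of_simplexETF (hK : 2 ≤ K) (hunit : ∀ j, ‖w j‖ = 1)
    (hpair : ∀ i j : Fin K, i ≠ j → ⟪w i, w j⟫ = -1 / (K - 1)) : ∑ j, w j = 0 := by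
  rw [← inner_self_eq_zero (𝕜 := ℝ), sum_inner]
  exact sum_eq_zero fun i _ => inner_sum_eq_zero_of_simplexETF hK hunit hpair i

end SimplexETF

/-- For a simplex ETF classifier, the softmax probability of class `k` over the
unit ball is maximized at `m = ŵ_k`, with value `1/(1 + (K-1) e^{-K/(K-1)})`. -/
theorem softmax_max_at_prototype (d K : ℕ) (hK : 2 ≤ K)
    (w : Fin K → EuclideanSpace ℝ (Fin d))
    (hunit : ∀ j, ‖w j‖ = 1)
    (hpair : ∀ i j : Fin K, i ≠ j → ⟪w i, w j⟫ = -1 / (K - 1))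
    (k : Fin K) :
    (Real.exp ⟪w k, w k⟫ / ∑ j : Fin K, Real.exp ⟪w j, w k⟫ =
      1 / (1 + ((K : ℝ) - 1) * Real.exp (-(K : ℝ) / (K - 1)))) ∧
    ∀ m : EuclideanSpace ℝ (Fin d), ‖m‖ ≤ 1 →
      Real.exp ⟪w k, m⟫ / ∑ j : Fin K, Real.exp ⟪w j, m⟫ ≤
      Real.exp ⟪w k, w k⟫ / ∑ j : Fin K, Real.exp ⟪w j, w k⟫ := by
  have hK1 : (0 : ℝ) < K - 1 := by
    have : (2 : ℝ) ≤ K := by exact_mod_cast hK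
    linarith
  have hcard : (#(univ.erase k) : ℝ) = K - 1 := by
    rw [cast_card_erase_of_mem (mem_univ k), card_univ, Fintype.card_fin]
  set c := -(K : ℝ) / (K - 1) with hc
  have hgap : ∀ j ∈ univ.erase k, ⟪w j, w k⟫ - ⟪w k, w k⟫ = c := fun j hj => by
    rw [hpair j k (ne_of_mem_erase hj), real_inner_self_eq_norm_sq, hunit k, hc]
    field_simp
    ring
  have hval : exp ⟪w k, w k⟫ / ∑ j, exp ⟪w j, w k⟫ = 1 / (1 + (K - 1) * exp c) := by
    rw [exp_div_sum_exp_eq_one_div (fun j => ⟪w j, w k⟫), sum_congr rfl fun j hj => by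
      rw [hgap j hj], sum_const, nsmul_eq_mul, hcard]
  refine ⟨hval, fun m hm => ?_⟩
  have hgaps : #(univ.erase k) * c ≤ ∑ j ∈ univ.erase k, (⟪w j, m⟫ - ⟪w k, m⟫) := by
    have hwk : ⟪w k, m⟫ ≤ 1 := (real_inner_le_norm _ _).trans (by rw [hunit k, one_mul]; exact hm)
    rw [sum_erase_sub_eq (fun j => ⟪w j, m⟫), ← sum_inner, sum_eq_zero_of_simplexETF hK hunit hpair,
      inner_zero_left, Fintype.card_fin, hcard, mul_div_cancel₀ _ hK1.ne']
    nlinarith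
  have hlower := card_mul_exp_le_sum_exp _ _ hgaps
  rw [hcard] at hlower
  rw [hval, exp_div_sum_exp_eq_one_div (fun j => ⟪w j, m⟫)]
  gcongr
end
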